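/- Let Ω ⊂ ℝ² be the open triangle with vertices A(−1/2, 1/2), B(1/2, 1/2), C(1/2, 3/2), and define z(x,y) = 1 − 2y/(1 + √(1+4xy)). Then: (i) 1 + 4xy > 0 for every (x,y) ∈ Ω, so z is well defined and C¹ on Ω; (ii) for every (x,y) ∈ Ω, z(x,y) + x·∂z/∂x(x,y) − y·∂z/∂y(x,y) = 1; (iii) z(x, x+1) = 0 for every x ∈ (−1/2, 1/2). -/

import Mathlib

open MeasureTheory Set Real

/-- The open triangle with vertices A(−1/2,1/2), B(1/2,1/2), C(1/2,3/2):
its sides lie on the lines y = 1/2, x = 1/2 and y = x + 1. -/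
def TriangleEx3 : Set (ℝ × ℝ) :=
  {p : ℝ × ℝ | 1/2 < p.2 ∧ p.1 < 1/2 ∧ p.2 < p.1 + 1}

/-- The explicit solution z(x,y) = 1 − 2y/(1 + √(1+4xy)) of Example 3. -/
noncomputable def zEx3 : ℝ × ℝ → ℝ := fun p =>
  1 - 2 * p.2 / (1 + Real.sqrt (1 + 4 * p.1 * p.2))

/-- Partial derivative ∂z/∂x. -/
noncomputable def zEx3x (p : ℝ × ℝ) : ℝ := deriv (fun t => zEx3 (t, p.2)) p.1

/-- Partial derivative ∂z/∂y. -/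
noncomputable def zEx3y (p : ℝ × ℝ) : ℝ := deriv (fun t => zEx3 (p.1, t)) p.2

/-!
The characteristics of u(x,y) = (x,−y) are the hyperbolas xy = const, so any function of the form
a − y·g(xy) solves z + x ∂ₓz − y ∂ᵧz = a: the transport derivative of g(xy) vanishes and that of
y is −y. The solution of Example 3 is of this form with g(t) = 2/(1 + √(1+4t)), which is smooth
where 1 + 4t > 0, i.e. on all of Ω. On the hypotenuse y = x + 1 we have 1 + 4xy = (2x+1)², which
makes z vanish there.
-/

theorem transport_sub_mul_comp_mul {g : ℝ → ℝ} {g' : ℝ} (a : ℝ) {x y : ℝ}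
    (hg : HasDerivAt g g' (x * y)) :
    (a - y * g (x * y)) + x * deriv (fun t => a - y * g (t * y)) x
      - y * deriv (fun t => a - t * g (x * t)) y = a := by
  have hx : HasDerivAt (fun t => a - y * g (t * y)) (-(y * (g' * y))) x := by
    have := (hg.comp x ((hasDerivAt_id x).mul_const y)).const_mul y |>.const_sub a
    simpa using this
  have hy : HasDerivAt (fun t => a - t * g (x * t)) (-(1 * g (x * y) + y * (g' * x))) y := by
    have := ((hasDerivAt_id y).mul ((hg.comp y ((hasDerivAt_id y).const_mul x)))).const_sub a
    simpa using this
  rw [hx.deriv, hy.deriv]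
  ring

theorem one_add_four_mul_mul_pos {x y : ℝ} (hy : 0 ≤ y) (hyx : y < x + 1) :
    0 < 1 + 4 * x * y := by
  rcases le_or_gt 0 x with hx | hx
  · positivity
  · nlinarith [sq_nonneg (2 * x + 1)]

theorem one_add_four_mul_pos_of_mem_triangleEx3 {p : ℝ × ℝ} (hp : p ∈ TriangleEx3) :
    0 < 1 + 4 * p.1 * p.2 :=
  one_add_four_mul_mul_pos (by linarith [hp.1]) hp.2.2

noncomputable def zEx3Profile (t : ℝ) : ℝ := 2 / (1 + √(1 + 4 * t))

theorem zEx3_eq (p : ℝ × ℝ) : zEx3 p = 1 - p.2 * zEx3Profile (p.1 * p.2) := by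
  simp only [zEx3, zEx3Profile, mul_div_assoc', mul_comm p.2 2, mul_assoc]

theorem contDiffAt_zEx3Profile {n : WithTop ℕ∞} {t : ℝ} (ht : 0 < 1 + 4 * t) :
    ContDiffAt ℝ n zEx3Profile t := by
  have hsqrt : ContDiffAt ℝ n (fun s : ℝ => √(1 + 4 * s)) t :=
    (contDiffAt_sqrt ht.ne').comp t (by fun_prop)
  exact contDiffAt_const.div (contDiffAt_const.add hsqrt) (by positivity)

theorem contDiffOn_zEx3 {n : WithTop ℕ∞} : ContDiffOn ℝ n zEx3 TriangleEx3 := by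
  intro p hp
  have hG : ContDiffAt ℝ n zEx3Profile (p.1 * p.2) := by
    apply contDiffAt_zEx3Profile
    simpa [mul_assoc] using one_add_four_mul_pos_of_mem_triangleEx3 hp
  rw [funext zEx3_eq]
  exact (contDiffAt_const.sub (contDiffAt_snd.mul (hG.comp (f := fun q : ℝ × ℝ => q.1 * q.2) p (by fun_prop)))).contDiffWithinAt

theorem zEx3_transport {p : ℝ × ℝ} (hp : p ∈ TriangleEx3) :
    zEx3 p + p.1 * zEx3x p - p.2 * zEx3y p = 1 := by
  have hG : DifferentiableAt ℝ zEx3Profile (p.1 * p.2) := by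
    apply (contDiffAt_zEx3Profile (n := 1) _).differentiableAt one_ne_zero
    simpa [mul_assoc] using one_add_four_mul_pos_of_mem_triangleEx3 hp
  simpa only [zEx3x, zEx3y, zEx3_eq] using transport_sub_mul_comp_mul 1 hG.hasDerivAt

theorem zEx3_apply_add_one {x : ℝ} (hx : -1 / 2 ≤ x) : zEx3 (x, x + 1) = 0 := by
  have hsqrt : √(1 + 4 * x * (x + 1)) = 2 * x + 1 := by
    rw [show 1 + 4 * x * (x + 1) = (2 * x + 1) ^ 2 by ring, sqrt_sq (by linarith)]
  have hx1 : x + 1 ≠ 0 := by linarith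
  simp only [zEx3, hsqrt]
  rw [show 1 + (2 * x + 1) = 2 * (x + 1) by ring, mul_div_mul_left _ _ two_ne_zero,
    div_self hx1, sub_self]

theorem stmt_2 :
    (∀ p ∈ TriangleEx3, 0 < 1 + 4 * p.1 * p.2) ∧
    ContDiffOn ℝ 1 zEx3 TriangleEx3 ∧
    (∀ p ∈ TriangleEx3, zEx3 p + p.1 * zEx3x p - p.2 * zEx3y p = 1) ∧
    (∀ x ∈ Ioo (-(1:ℝ)/2) (1/2), zEx3 (x, x + 1) = 0) :=
  ⟨fun _ hp => one_add_four_mul_pos_of_mem_triangleEx3 hp, contDiffOn_zEx3,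
    fun _ hp => zEx3_transport hp, fun _ hx => zEx3_apply_add_one hx.1.le⟩
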